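/- Θ'''(x) = (1−x)/(x²(1+x)³) is the third derivative of Θ(x) = 1 + x + x(1+2x)·log(1+1/x) − 3x − 1, and Θ''(x) ≥ 0 as well as Θ'(x) ≤ 0 for all x ≥ 1. -/

import Mathlib

/-!
The derivatives are routine once `log (1 + 1/x)` is seen to have derivative `-1/(x(1+x))`.
Under the substitution `t = 1/x` the two sign conditions become the rational bounds
  `t(t² + 6t + 4)/(1 + t)² ≤ 4 log(1 + t)` for `0 ≤ t ≤ 1`,
  `log(1 + t) ≤ t(3t + 4)/((1 + t)(t + 4))` for `0 ≤ t ≤ 2`.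
Both are equalities at `t = 0`, and the difference of the two sides has derivative
`t²(1 - t)/(1 + t)³`, resp. `t²(2 - t)/((1 + t)²(t + 4)²)`, nonnegative on the interval.
-/

noncomputable def Θ (x : ℝ) : ℝ := 1 + x + x*(1+2*x) * Real.log (1 + 1/x) - 3*x - 1

open Set Real

noncomputable def Θ' (x : ℝ) : ℝ := -4 + 1 / (1 + x) + (1 + 4 * x) * log (1 + 1 / x)

noncomputable def Θ'' (x : ℝ) : ℝ :=
  -(1 + 2 * x * (3 + 2 * x)) / (x * (1 + x) ^ 2) + 4 * log (1 + 1 / x)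

theorem Set.EqOn.iteratedDeriv_succ {𝕜 F : Type*} [NontriviallyNormedField 𝕜]
    [NormedAddCommGroup F] [NormedSpace 𝕜 F] {f g g' : 𝕜 → F} {s : Set 𝕜} {n : ℕ}
    (hs : IsOpen s) (hf : EqOn (iteratedDeriv n f) g s)
    (hg : ∀ x ∈ s, HasDerivAt g (g' x) x) : EqOn (iteratedDeriv (n + 1) f) g' s :=
  fun x hx => by rw [_root_.iteratedDeriv_succ, hf.deriv hs hx, (hg x hx).deriv]

theorem monotoneOn_Icc_of_hasDerivAt_nonneg {f f' : ℝ → ℝ} {a b : ℝ}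
    (hf : ∀ x ∈ Icc a b, HasDerivAt f (f' x) x) (hf' : ∀ x ∈ Ioo a b, 0 ≤ f' x) :
    MonotoneOn f (Icc a b) := by
  refine monotoneOn_of_hasDerivWithinAt_nonneg (f' := f') (convex_Icc a b)
    (fun x hx => (hf x hx).continuousAt.continuousWithinAt) (fun x hx => ?_) ?_
  · rw [interior_Icc] at hx ⊢
    exact (hf x (Ioo_subset_Icc_self hx)).hasDerivWithinAt
  · rwa [interior_Icc]

theorem div_le_four_mul_log_one_add {t : ℝ} (ht₀ : 0 ≤ t) (ht₁ : t ≤ 1) :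
    t * (t ^ 2 + 6 * t + 4) / (1 + t) ^ 2 ≤ 4 * log (1 + t) := by
  have hderiv : ∀ s ∈ Icc (0 : ℝ) 1,
      HasDerivAt (fun s => 4 * log (1 + s) - s * (s ^ 2 + 6 * s + 4) / (1 + s) ^ 2)
        (s ^ 2 * (1 - s) / (1 + s) ^ 3) s := by
    intro s hs
    have h₁ : 1 + s ≠ 0 := by linarith [hs.1]
    have hu : HasDerivAt (fun s : ℝ => 1 + s) 1 s := (hasDerivAt_id' s).const_add 1
    have hp : HasDerivAt (fun s : ℝ => s * (s ^ 2 + 6 * s + 4)) (3 * s ^ 2 + 12 * s + 4) s :=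
      ((hasDerivAt_id' s).fun_mul (((hasDerivAt_pow 2 s).fun_add
        ((hasDerivAt_id' s).const_mul 6)).add_const 4)).congr_deriv (by ring)
    refine (((hu.log h₁).const_mul 4).fun_sub
      (hp.fun_div (hu.fun_pow 2) (pow_ne_zero 2 h₁))).congr_deriv ?_
    field_simp
    ring
  have hmono := monotoneOn_Icc_of_hasDerivAt_nonneg hderiv fun s hs => by
    have := hs.1; have := hs.2; positivity
  have := hmono ⟨le_rfl, zero_le_one⟩ ⟨ht₀, ht₁⟩ ht₀
  simp only [add_zero, log_one, mul_zero, zero_mul, zero_div, sub_zero] at this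
  linarith

theorem log_one_add_le_div {t : ℝ} (ht₀ : 0 ≤ t) (ht₂ : t ≤ 2) :
    log (1 + t) ≤ t * (3 * t + 4) / ((1 + t) * (t + 4)) := by
  have hderiv : ∀ s ∈ Icc (0 : ℝ) 2,
      HasDerivAt (fun s => s * (3 * s + 4) / ((1 + s) * (s + 4)) - log (1 + s))
        (s ^ 2 * (2 - s) / ((1 + s) ^ 2 * (s + 4) ^ 2)) s := by
    intro s hs
    have h₁ : 1 + s ≠ 0 := by linarith [hs.1]
    have h₄ : s + 4 ≠ 0 := by linarith [hs.1]
    have hu : HasDerivAt (fun s : ℝ => 1 + s) 1 s := (hasDerivAt_id' s).const_add 1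
    have hp : HasDerivAt (fun s : ℝ => s * (3 * s + 4)) (6 * s + 4) s :=
      ((hasDerivAt_id' s).fun_mul (((hasDerivAt_id' s).const_mul 3).add_const 4)).congr_deriv
        (by ring)
    have hq : HasDerivAt (fun s : ℝ => (1 + s) * (s + 4)) (2 * s + 5) s :=
      (hu.fun_mul ((hasDerivAt_id' s).add_const 4)).congr_deriv (by ring)
    refine ((hp.fun_div hq (mul_ne_zero h₁ h₄)).fun_sub (hu.log h₁)).congr_deriv ?_
    field_simp
    ring
  have hmono := monotoneOn_Icc_of_hasDerivAt_nonneg hderiv fun s hs => by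
    have := hs.1; have := hs.2; positivity
  have := hmono ⟨le_rfl, zero_le_two⟩ ⟨ht₀, ht₂⟩ ht₀
  simp only [add_zero, log_one, mul_zero, zero_mul, zero_div, sub_zero] at this
  linarith

section Derivatives

variable {x : ℝ} (hx : x ≠ 0) (hx₁ : 1 + x ≠ 0)
include hx hx₁

theorem hasDerivAt_log_one_add_inv :
    HasDerivAt (fun y => log (1 + 1 / y)) (-1 / (x * (1 + x))) x := by
  have hx₁' : x + 1 ≠ 0 := by rwa [add_comm]
  have h : 1 + 1 / x ≠ 0 := by
    rw [one_add_div hx]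
    exact div_ne_zero hx₁' hx
  refine ((((hasDerivAt_const x (1 : ℝ)).fun_div (hasDerivAt_id' x) hx).const_add 1).log
    h).congr_deriv ?_
  field_simp
  ring

theorem hasDerivAt_Θ : HasDerivAt Θ (Θ' x) x := by
  have hL := hasDerivAt_log_one_add_inv hx hx₁
  refine ((((hasDerivAt_id' x).const_add 1).fun_add (((hasDerivAt_id' x).fun_mul
    (((hasDerivAt_id' x).const_mul 2).const_add 1)).fun_mul hL)).fun_sub
    ((hasDerivAt_id' x).const_mul 3)).sub_const 1 |>.congr_deriv ?_
  rw [Θ']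
  field_simp
  ring

theorem hasDerivAt_Θ' : HasDerivAt Θ' (Θ'' x) x := by
  have hL := hasDerivAt_log_one_add_inv hx hx₁
  refine (((hasDerivAt_const x (1 : ℝ)).fun_div ((hasDerivAt_id' x).const_add 1) hx₁).const_add
    (-4)).fun_add ((((hasDerivAt_id' x).const_mul 4).const_add 1).fun_mul hL) |>.congr_deriv ?_
  rw [Θ'']
  field_simp
  ring

theorem hasDerivAt_Θ'' : HasDerivAt Θ'' ((1 - x) / (x ^ 2 * (1 + x) ^ 3)) x := by
  have hL := hasDerivAt_log_one_add_inv hx hx₁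
  have hu : HasDerivAt (fun y : ℝ => 1 + y) 1 x := (hasDerivAt_id' x).const_add 1
  have hp : HasDerivAt (fun y : ℝ => -(1 + 2 * y * (3 + 2 * y))) (-(6 + 8 * x)) x :=
    ((((hasDerivAt_id' x).const_mul 2).fun_mul
      (((hasDerivAt_id' x).const_mul 2).const_add 3)).const_add 1).fun_neg.congr_deriv (by ring)
  have hq : HasDerivAt (fun y : ℝ => y * (1 + y) ^ 2) ((1 + x) ^ 2 + 2 * x * (1 + x)) x :=
    ((hasDerivAt_id' x).fun_mul (hu.fun_pow 2)).congr_deriv (by ring)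
  refine (hp.fun_div hq (by positivity)).fun_add (hL.const_mul 4) |>.congr_deriv ?_
  field_simp
  ring

end Derivatives

theorem Θ''_nonneg {x : ℝ} (hx : 1 ≤ x) : 0 ≤ Θ'' x := by
  have hx₀ : 0 < x := by linarith
  have h := div_le_four_mul_log_one_add (t := 1 / x) (by positivity)
    (by rwa [div_le_one hx₀])
  have h_eq : 1 / x * ((1 / x) ^ 2 + 6 * (1 / x) + 4) / (1 + 1 / x) ^ 2
      = (1 + 2 * x * (3 + 2 * x)) / (x * (1 + x) ^ 2) := by
    field_simp
    ring
  rw [Θ'', neg_div]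
  linarith

theorem Θ'_nonpos {x : ℝ} (hx : 1 / 2 ≤ x) : Θ' x ≤ 0 := by
  have hx₀ : 0 < x := by linarith
  have h := log_one_add_le_div (t := 1 / x) (by positivity)
    (by rw [div_le_iff₀ hx₀]; linarith)
  have key : (1 + 4 * x) * log (1 + 1 / x) ≤ 4 - 1 / (1 + x) :=
    calc (1 + 4 * x) * log (1 + 1 / x)
        ≤ (1 + 4 * x) * (1 / x * (3 * (1 / x) + 4) / ((1 + 1 / x) * (1 / x + 4))) :=
          mul_le_mul_of_nonneg_left h (by positivity)
      _ = 4 - 1 / (1 + x) := by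
          field_simp
          ring
  rw [Θ']
  linarith

theorem stmt12 : ∀ x : ℝ, 1 ≤ x →
    iteratedDeriv 3 Θ x = (1-x)/(x^2*(1+x)^3) ∧
    0 ≤ iteratedDeriv 2 Θ x ∧
    deriv Θ x ≤ 0 := by
  intro x hx
  have hd (y : ℝ) (hy : y ∈ Ioi 0) : y ≠ 0 ∧ 1 + y ≠ 0 := by
    simp only [mem_Ioi] at hy
    constructor <;> positivity
  have h₁ : EqOn (iteratedDeriv 1 Θ) Θ' (Ioi 0) :=
    (iteratedDeriv_zero (f := Θ) ▸ eqOn_refl Θ _).iteratedDeriv_succ isOpen_Ioi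
      fun y hy => hasDerivAt_Θ (hd y hy).1 (hd y hy).2
  have h₂ : EqOn (iteratedDeriv 2 Θ) Θ'' (Ioi 0) :=
    h₁.iteratedDeriv_succ isOpen_Ioi fun y hy => hasDerivAt_Θ' (hd y hy).1 (hd y hy).2
  have h₃ : EqOn (iteratedDeriv 3 Θ) (fun y => (1 - y) / (y ^ 2 * (1 + y) ^ 3)) (Ioi 0) :=
    h₂.iteratedDeriv_succ isOpen_Ioi fun y hy => hasDerivAt_Θ'' (hd y hy).1 (hd y hy).2
  have hx₀ : x ∈ Ioi 0 := show 0 < x by linarith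
  refine ⟨h₃ hx₀, h₂ hx₀ ▸ Θ''_nonneg hx, ?_⟩
  rw [← iteratedDeriv_one, h₁ hx₀]
  exact Θ'_nonpos (by linarith)
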